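/- arXiv:1103.4220 — 2 statements merged into one kernel-verified Lean document; each statement's English description precedes it below -/
import Mathlib

section
/- Let N ≥ 2 and let 1 ≤ k < l ≤ N. Define for 1 ≤ i ≤ N-1 the quantities φ_{k,l}(i) = i(i-1)/[(N-1)(N-2)] if i < k; −(i-1)(N-i-1)/[(N-1)(N-2)] if k ≤ i < l; (N-i-1)(N-i)/[(N-1)(N-2)] if l ≤ i ≤ N-1; and φ'_{k,l}(i) = (1{i≥k} − i/N)·(1{i≥l} − i/N). Then |φ_{k,l}(i)| ≤ (N/(N-1))^2 · |φ'_{k,l}(i)| for all 1 ≤ i ≤ N-1. -/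
/-!
Multiplying through by `N²`, the right-hand side becomes `i²`, `i (N - i)` or `(N - i)²` over
`(N - 1)²`. Below `k` and from `l` on (two ranges exchanged by `i ↦ N - i`) the claim reduces to
`(i - 1)(N - 1) ≤ i (N - 2)`, i.e. `i + 1 ≤ N`; between `k` and `l` the difference of the
cross-multiplied sides is `(N - 1)² - i (N - i) ≥ 0`. For `N = 2` the left-hand side vanishes.
-/

theorem abs_div_pred_mul_sub_two_le {n P a b : ℝ} (hn : 2 ≤ n)
    (h : |P| * (n - 1) ≤ |n * a * (n * b)| * (n - 2)) :
    |P / ((n - 1) * (n - 2))| ≤ (n / (n - 1)) ^ 2 * |a * b| := by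
  rcases hn.eq_or_lt with rfl | hn
  · simp only [sub_self, mul_zero, div_zero, abs_zero]
    positivity
  have hn1 : 0 < n - 1 := by linarith
  have hn2 : 0 < n - 2 := by linarith
  have hrhs : (n / (n - 1)) ^ 2 * |a * b| = |n * a * (n * b)| / (n - 1) ^ 2 := by
    rw [div_pow, abs_mul, abs_mul, abs_mul, abs_mul, abs_of_pos (by linarith : 0 < n)]
    field_simp
  rw [hrhs, abs_div, abs_of_pos (mul_pos hn1 hn2), div_le_div_iff₀ (mul_pos hn1 hn2) (by positivity)]
  nlinarith

theorem abs_phi_le_low {n x : ℝ} (hx : 1 ≤ x) (hxn : x + 1 ≤ n) :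
    |x * (x - 1) / ((n - 1) * (n - 2))| ≤ (n / (n - 1)) ^ 2 * |(0 - x / n) * (0 - x / n)| := by
  refine abs_div_pred_mul_sub_two_le (by linarith) ?_
  have hnx : n * (0 - x / n) = -x := by
    rw [zero_sub, mul_neg, mul_div_cancel₀ _ (by linarith)]
  rw [hnx, abs_of_nonneg (by nlinarith : 0 ≤ x * (x - 1)), abs_of_nonneg (by nlinarith : 0 ≤ -x * -x)]
  nlinarith

theorem abs_phi_le_mid {n x : ℝ} (hx : 1 ≤ x) (hxn : x + 1 ≤ n) :
    |-((x - 1) * (n - x - 1)) / ((n - 1) * (n - 2))| ≤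
      (n / (n - 1)) ^ 2 * |(1 - x / n) * (0 - x / n)| := by
  refine abs_div_pred_mul_sub_two_le (by linarith) ?_
  have hn : n ≠ 0 := by linarith
  have hnx : n * (1 - x / n) * (n * (0 - x / n)) = -((n - x) * x) := by
    field_simp
    ring
  rw [hnx, abs_neg, abs_neg, abs_of_nonneg (by nlinarith : 0 ≤ (x - 1) * (n - x - 1)),
    abs_of_nonneg (by nlinarith : 0 ≤ (n - x) * x)]
  nlinarith [sq_nonneg (n - 2 * x), sq_nonneg (x - 1), sq_nonneg (n - x - 1)]

theorem abs_phi_le_high {n x : ℝ} (hx : 1 ≤ x) (hxn : x + 1 ≤ n) :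
    |(n - x - 1) * (n - x) / ((n - 1) * (n - 2))| ≤
      (n / (n - 1)) ^ 2 * |(1 - x / n) * (1 - x / n)| := by
  have hn : n ≠ 0 := by linarith
  have := abs_phi_le_low (n := n) (x := n - x) (by linarith) (by linarith)
  rwa [show (n - x) * (n - x - 1) = (n - x - 1) * (n - x) by ring,
    show 0 - (n - x) / n = -(1 - x / n) by field_simp; ring, neg_mul_neg] at this

open Classical in
theorem stmt8_general (N k l i : ℕ) (hkl : k < l) (hi : 1 ≤ i) (hiN : i ≤ N - 1) :
    |(if i < k then (i : ℝ) * ((i : ℝ) - 1) / (((N : ℝ) - 1) * ((N : ℝ) - 2))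
      else if i < l then -(((i : ℝ) - 1) * ((N : ℝ) - i - 1)) / (((N : ℝ) - 1) * ((N : ℝ) - 2))
      else ((N : ℝ) - i - 1) * ((N : ℝ) - i) / (((N : ℝ) - 1) * ((N : ℝ) - 2)))|
    ≤ ((N : ℝ) / ((N : ℝ) - 1)) ^ 2 *
      |((if k ≤ i then (1 : ℝ) else 0) - (i : ℝ) / N) *
        ((if l ≤ i then (1 : ℝ) else 0) - (i : ℝ) / N)| := by
  have hx : (1 : ℝ) ≤ i := by exact_mod_cast hi
  have hxn : (i : ℝ) + 1 ≤ N := by exact_mod_cast (by omega : i + 1 ≤ N)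
  split_ifs <;> first
    | omega
    | exact abs_phi_le_low hx hxn
    | exact abs_phi_le_mid hx hxn
    | exact abs_phi_le_high hx hxn

open Classical in
theorem stmt8 (N k l i : ℕ) (hN : 2 ≤ N) (hk : 1 ≤ k) (hkl : k < l) (hlN : l ≤ N)
    (hi : 1 ≤ i) (hiN : i ≤ N - 1) :
    |(if i < k then (i : ℝ) * ((i : ℝ) - 1) / (((N : ℝ) - 1) * ((N : ℝ) - 2))
      else if i < l then -(((i : ℝ) - 1) * ((N : ℝ) - i - 1)) / (((N : ℝ) - 1) * ((N : ℝ) - 2))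
      else ((N : ℝ) - i - 1) * ((N : ℝ) - i) / (((N : ℝ) - 1) * ((N : ℝ) - 2)))|
    ≤ ((N : ℝ) / ((N : ℝ) - 1)) ^ 2 *
      |((if k ≤ i then (1 : ℝ) else 0) - (i : ℝ) / N) *
        ((if l ≤ i then (1 : ℝ) else 0) - (i : ℝ) / N)| :=
  stmt8_general N k l i hkl hi hiN
end

section
/- Let N ≥ 3 and 1 ≤ k < l < m ≤ N. Define for 1 ≤ i ≤ N-1: θ_{k,l,m}(i) = −i(i-1)(i-2)/[(N-2)(N-3)(N-4)] if i < k; (i-1)(i-2)(N-i-2)/[(N-2)(N-3)(N-4)] if k ≤ i < l; −(i-2)(N-i-2)(N-i-1)/[(N-2)(N-3)(N-4)] if l ≤ i < m; (N-i-2)(N-i-1)(N-i)/[(N-2)(N-3)(N-4)] if m ≤ i ≤ N-1. Define θ'_{k,l,m}(i) = (1{i≥k} − i/N)(1{i≥l} − i/N)(1{i≥m} − i/N). Then |θ_{k,l,m}(i)| ≤ (N/(N-2))^3 · |θ'_{k,l,m}(i)| for all 1 ≤ i ≤ N-1, provided N ≥ 5 so the denominators are positive. -/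
/-!
Write `c = N - 2`, `x = i` and `y = N - i`. After multiplying by `(N/(N-2))³`, each factor
`1{i ≥ ·} - i/N` of `θ'` becomes `x/c` or `y/c` in absolute value, while in each of the four
ranges `|θ|` is a product of the ratios `x/c, (x-1)/(c-1), (x-2)/(c-2)`, their analogues in `y`,
and `(x-2)/c` or `(y-2)/c`. Each ratio is dominated by the matching `x/c` or `y/c`, since
lowering numerator and denominator by the same amount lowers a fraction that is at most `1`. The
reflection `x ↦ N - x` exchanges the ranges `i < k` and `m ≤ i` as well as `k ≤ i < l` and
`l ≤ i < m`, so two estimates suffice.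
-/

lemma pow_three_mul_abs_mul_mul {R : Type*} [CommRing R] [LinearOrder R] [IsStrictOrderedRing R]
    (t a b c : R) :
    t ^ 3 * |a * b * c| = (t * |a|) * (t * |b|) * (t * |c|) := by
  rw [abs_mul, abs_mul]
  ring

section RatioBounds

variable {K : Type*} [Field K] [LinearOrder K] [IsStrictOrderedRing K]

lemma sub_div_sub_le_div {a c j : K} (hj : 0 ≤ j) (hjc : j < c) (hac : a ≤ c) :
    (a - j) / (c - j) ≤ a / c := by
  rw [div_le_div_iff₀ (by linarith) (by linarith)]
  nlinarith

variable {a n : K}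

-- `a = 1 ∨ 2 ≤ a` stands for `a` being a positive integer; it keeps `(a - 1) * (a - 2) ≥ 0`.

lemma sub_one_mul_sub_two_nonneg (ha : a = 1 ∨ 2 ≤ a) : 0 ≤ (a - 1) * (a - 2) := by
  rcases ha with rfl | ha
  · norm_num
  · exact mul_nonneg (by linarith) (by linarith)

lemma sub_one_mul_sub_two_div_le_sq (ha : a = 1 ∨ 2 ≤ a) (han : a ≤ n - 2) (hn : 4 < n) :
    (a - 1) * (a - 2) / ((n - 3) * (n - 4)) ≤ (a / (n - 2)) ^ 2 := by
  rcases ha with rfl | ha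
  · norm_num
    positivity
  have h1 : (a - 1) / (n - 3) ≤ a / (n - 2) := by
    convert sub_div_sub_le_div zero_le_one (by linarith) han using 2; ring
  have h2 : (a - 2) / (n - 4) ≤ a / (n - 2) := by
    convert sub_div_sub_le_div zero_le_two (by linarith) han using 2; ring
  rw [mul_div_mul_comm, sq]
  exact mul_le_mul h1 h2 (div_nonneg (by linarith) (by linarith))
    (div_nonneg (by linarith) (by linarith))

lemma abs_mul_sub_one_mul_sub_two_div_le (ha : a = 1 ∨ 2 ≤ a) (han : a ≤ n - 2) (hn : 4 < n) :
    |a * (a - 1) * (a - 2) / ((n - 2) * (n - 3) * (n - 4))| ≤ (a / (n - 2)) ^ 3 := by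
  have ha0 : 0 ≤ a := by rcases ha with rfl | ha <;> linarith
  calc |a * (a - 1) * (a - 2) / ((n - 2) * (n - 3) * (n - 4))|
      = |a / (n - 2) * ((a - 1) * (a - 2) / ((n - 3) * (n - 4)))| := by
        rw [div_mul_div_comm, ← mul_assoc, ← mul_assoc]
    _ = a / (n - 2) * ((a - 1) * (a - 2) / ((n - 3) * (n - 4))) :=
        abs_of_nonneg (mul_nonneg (div_nonneg ha0 (by linarith))
          (div_nonneg (sub_one_mul_sub_two_nonneg ha) (by nlinarith)))
    _ ≤ a / (n - 2) * (a / (n - 2)) ^ 2 := by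
        gcongr
        · exact div_nonneg ha0 (by linarith)
        · exact sub_one_mul_sub_two_div_le_sq ha han hn
    _ = (a / (n - 2)) ^ 3 := by ring

lemma abs_sub_one_mul_sub_two_mul_div_le (ha : a = 1 ∨ 2 ≤ a) (han : a ≤ n - 2) (hn : 4 < n) :
    |(a - 1) * (a - 2) * (n - a - 2) / ((n - 2) * (n - 3) * (n - 4))| ≤
      (a / (n - 2)) ^ 2 * ((n - a) / (n - 2)) := by
  calc |(a - 1) * (a - 2) * (n - a - 2) / ((n - 2) * (n - 3) * (n - 4))|
      = |(a - 1) * (a - 2) / ((n - 3) * (n - 4)) * ((n - a - 2) / (n - 2))| := by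
        rw [div_mul_div_comm, mul_comm ((n - 3) * (n - 4)), ← mul_assoc]
    _ = (a - 1) * (a - 2) / ((n - 3) * (n - 4)) * ((n - a - 2) / (n - 2)) :=
        abs_of_nonneg (mul_nonneg (div_nonneg (sub_one_mul_sub_two_nonneg ha) (by nlinarith))
          (div_nonneg (by linarith) (by linarith)))
    _ ≤ (a / (n - 2)) ^ 2 * ((n - a) / (n - 2)) :=
        mul_le_mul (sub_one_mul_sub_two_div_le_sq ha han hn)
          (div_le_div_of_nonneg_right (by linarith) (by linarith))
          (div_nonneg (by linarith) (by linarith)) (sq_nonneg _)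

lemma div_sub_two_mul_abs_zero_sub_div (hn : 2 < n) (ha : 0 ≤ a) :
    n / (n - 2) * |0 - a / n| = a / (n - 2) := by
  rw [zero_sub, abs_neg, abs_of_nonneg (div_nonneg ha (by linarith))]
  field_simp

lemma div_sub_two_mul_abs_one_sub_div (hn : 2 < n) (han : a ≤ n) :
    n / (n - 2) * |1 - a / n| = (n - a) / (n - 2) := by
  rw [abs_of_nonneg (sub_nonneg.2 ((div_le_one₀ (by linarith)).2 han))]
  field_simp

end RatioBounds

lemma Nat.cast_eq_one_or_two_le {j : ℕ} (hj : 1 ≤ j) : (j : ℝ) = 1 ∨ 2 ≤ (j : ℝ) := by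
  rcases (by omega : j = 1 ∨ 2 ≤ j) with rfl | h
  · exact Or.inl Nat.cast_one
  · exact Or.inr (by exact_mod_cast h)

open Classical in
theorem stmt10 (N k l m i : ℕ) (hN : 5 ≤ N) (hk : 1 ≤ k) (hkl : k < l) (hlm : l < m)
    (hmN : m ≤ N) (hi : 1 ≤ i) (hiN : i ≤ N - 1) :
    |(if i < k then
        -((i : ℝ) * ((i : ℝ) - 1) * ((i : ℝ) - 2)) /
          (((N : ℝ) - 2) * ((N : ℝ) - 3) * ((N : ℝ) - 4))
      else if i < l then
        ((i : ℝ) - 1) * ((i : ℝ) - 2) * ((N : ℝ) - i - 2) /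
          (((N : ℝ) - 2) * ((N : ℝ) - 3) * ((N : ℝ) - 4))
      else if i < m then
        -(((i : ℝ) - 2) * ((N : ℝ) - i - 2) * ((N : ℝ) - i - 1)) /
          (((N : ℝ) - 2) * ((N : ℝ) - 3) * ((N : ℝ) - 4))
      else
        ((N : ℝ) - i - 2) * ((N : ℝ) - i - 1) * ((N : ℝ) - i) /
          (((N : ℝ) - 2) * ((N : ℝ) - 3) * ((N : ℝ) - 4)))|
    ≤ ((N : ℝ) / ((N : ℝ) - 2)) ^ 3 *
      |((if k ≤ i then (1 : ℝ) else 0) - (i : ℝ) / N) *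
        ((if l ≤ i then (1 : ℝ) else 0) - (i : ℝ) / N) *
        ((if m ≤ i then (1 : ℝ) else 0) - (i : ℝ) / N)| := by
  have hn : (4 : ℝ) < N := by exact_mod_cast hN
  have hx := Nat.cast_eq_one_or_two_le hi
  have hy : (N : ℝ) - i = 1 ∨ 2 ≤ (N : ℝ) - i := by
    simpa [Nat.cast_sub (by omega : i ≤ N)] using Nat.cast_eq_one_or_two_le (j := N - i) (by omega)
  have hxN : (i : ℝ) ≤ N := by exact_mod_cast (by omega : i ≤ N)
  have hn2 : (2 : ℝ) < N := by linarith
  have hxle (h : i + 2 ≤ N) : (i : ℝ) ≤ N - 2 := by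
    rw [le_sub_iff_add_le]
    exact_mod_cast h
  have hyle (h : 2 ≤ i) : (N : ℝ) - i ≤ N - 2 := by
    have : (2 : ℝ) ≤ i := by exact_mod_cast h
    linarith
  rw [pow_three_mul_abs_mul_mul]
  split_ifs <;> try omega
  all_goals simp only [div_sub_two_mul_abs_zero_sub_div hn2 (Nat.cast_nonneg i),
    div_sub_two_mul_abs_one_sub_div hn2 hxN]
  · rw [neg_div, abs_neg]
    exact (abs_mul_sub_one_mul_sub_two_div_le hx (hxle (by omega)) hn).trans_eq (by ring)
  · exact (abs_sub_one_mul_sub_two_mul_div_le hx (hxle (by omega)) hn).trans_eq (by ring)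
  · rw [neg_div, abs_neg]
    exact (congrArg abs (by ring)).trans_le
      ((abs_sub_one_mul_sub_two_mul_div_le hy (hyle (by omega)) hn).trans_eq (by ring))
  · exact (congrArg abs (by ring)).trans_le
      ((abs_mul_sub_one_mul_sub_two_div_le hy (hyle (by omega)) hn).trans_eq (by ring))
end
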